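/- arXiv:1705.06959 — 5 statements merged into one kernel-verified Lean document; each statement's English description precedes it below -/
import Mathlib

section
/- Given θ ∈ [0,1] and Γ ∈ [0,1], the minimum value of α₁ over the set {(α₁,β₁) : α₁,β₁ ≥ 0, α₁²+β₁² ≤ 1, √θ·α₁ + √(1−θ)·β₁ = √Γ} equals 0 if Γ ≤ 1−θ, and equals √(θΓ) − √((1−θ)(1−Γ)) if Γ > 1−θ. -/
open Real Set

theorem stmt3 (θ Γ : ℝ) (hθ : θ ∈ Icc (0 : ℝ) 1) (hΓ : Γ ∈ Icc (0 : ℝ) 1) :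
    (Γ ≤ 1 - θ →
      IsLeast {α : ℝ | ∃ β : ℝ, 0 ≤ α ∧ 0 ≤ β ∧ α ^ 2 + β ^ 2 ≤ 1 ∧
        Real.sqrt θ * α + Real.sqrt (1 - θ) * β = Real.sqrt Γ} 0) ∧
    (1 - θ < Γ →
      IsLeast {α : ℝ | ∃ β : ℝ, 0 ≤ α ∧ 0 ≤ β ∧ α ^ 2 + β ^ 2 ≤ 1 ∧
        Real.sqrt θ * α + Real.sqrt (1 - θ) * β = Real.sqrt Γ}
        (Real.sqrt (θ * Γ) - Real.sqrt ((1 - θ) * (1 - Γ)))) := by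
  obtain ⟨hθ0, hθ1⟩ := hθ
  obtain ⟨hΓ0, hΓ1⟩ := hΓ
  set a := Real.sqrt θ with ha
  set b := Real.sqrt (1 - θ) with hb
  set g := Real.sqrt Γ with hg
  set h := Real.sqrt (1 - Γ) with hh
  have ha0 : 0 ≤ a := Real.sqrt_nonneg _
  have hb0 : 0 ≤ b := Real.sqrt_nonneg _
  have hg0 : 0 ≤ g := Real.sqrt_nonneg _
  have hh0 : 0 ≤ h := Real.sqrt_nonneg _
  have ha2 : a ^ 2 = θ := Real.sq_sqrt hθ0
  have hb2 : b ^ 2 = 1 - θ := Real.sq_sqrt (by linarith)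
  have hg2 : g ^ 2 = Γ := Real.sq_sqrt hΓ0
  have hh2 : h ^ 2 = 1 - Γ := Real.sq_sqrt (by linarith)
  constructor
  · intro hle
    constructor
    · by_cases hθeq : θ = 1
      · have hΓeq : Γ = 0 := by linarith [hΓ0, hle, hθeq ▸ hle]
        refine ⟨0, le_refl 0, le_refl 0, by norm_num, ?_⟩
        simp [hg, hΓeq]
      · have hθlt : θ < 1 := lt_of_le_of_ne hθ1 hθeq
        have hbpos : 0 < b := Real.sqrt_pos.mpr (by linarith)
        refine ⟨g / b, le_refl 0, div_nonneg hg0 hbpos.le, ?_, ?_⟩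
        · have : (g / b) ^ 2 = Γ / (1 - θ) := by
            rw [div_pow, hg2, hb2]
          rw [this]
          have : Γ / (1 - θ) ≤ 1 := (div_le_one (by linarith)).mpr hle
          nlinarith
        · field_simp; ring
    · rintro α ⟨β, hα, _, _, _⟩
      exact hα
  · intro hlt
    have hkey : Real.sqrt (θ * Γ) = a * g := Real.sqrt_mul hθ0 Γ
    have hkey2 : Real.sqrt ((1 - θ) * (1 - Γ)) = b * h := Real.sqrt_mul (by linarith) _
    rw [hkey, hkey2]
    constructor
    · refine ⟨b * g + a * h, ?_, by positivity, ?_, ?_⟩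
      · -- a*g ≥ b*h since (ag)^2 - (bh)^2 = θ+Γ-1 > 0
        nlinarith [mul_nonneg ha0 hg0, mul_nonneg hb0 hh0, sq_nonneg (a*g - b*h), sq_nonneg (a*g + b*h)]
      · nlinarith [sq_nonneg (a*g - b*h), sq_nonneg (b*g + a*h)]
      · linear_combination g * ha2 + g * hb2
    · rintro α ⟨β, hα, hβ, hsum, hc⟩
      nlinarith [sq_nonneg (g - a*α - b*β), mul_nonneg hb0 hh0, sq_nonneg (α - a*g), sq_nonneg (b*β), mul_nonneg hb0 hβ, sq_nonneg (α - a*g + b*h), sq_nonneg (α - a*g - b*h)]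
end

section
/- Given θ ∈ [0,1], Γ > 0 and p₁ > 0 with Γ ≤ p₁, the minimum of α₁ over {(α₁,β₁) : α₁,β₁ ≥ 0, α₁²+β₁² ≤ 1, √θ·α₁ + √(1−θ)·β₁ = √(Γ/p₁)} equals 0 if Γ ≤ p₁(1−θ), and equals √(θΓ/p₁) − √((1−θ)(1−Γ/p₁)) otherwise. -/
open Real Set

theorem stmt4 (θ Γ p₁ : ℝ) (hθ : θ ∈ Icc (0 : ℝ) 1) (hΓ : 0 < Γ) (hp : 0 < p₁)
    (hΓp : Γ ≤ p₁) :
    (Γ ≤ p₁ * (1 - θ) →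
      IsLeast {α : ℝ | ∃ β : ℝ, 0 ≤ α ∧ 0 ≤ β ∧ α ^ 2 + β ^ 2 ≤ 1 ∧
        Real.sqrt θ * α + Real.sqrt (1 - θ) * β = Real.sqrt (Γ / p₁)} 0) ∧
    (p₁ * (1 - θ) < Γ →
      IsLeast {α : ℝ | ∃ β : ℝ, 0 ≤ α ∧ 0 ≤ β ∧ α ^ 2 + β ^ 2 ≤ 1 ∧
        Real.sqrt θ * α + Real.sqrt (1 - θ) * β = Real.sqrt (Γ / p₁)}
        (Real.sqrt (θ * Γ / p₁) - Real.sqrt ((1 - θ) * (1 - Γ / p₁)))) := by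
  obtain ⟨hθ0, hθ1⟩ := hθ
  have hx0 : 0 ≤ Γ / p₁ := by positivity
  have hx1 : Γ / p₁ ≤ 1 := (div_le_one hp).mpr hΓp
  set s := Real.sqrt θ with hs
  set c := Real.sqrt (1 - θ) with hc
  set r := Real.sqrt (Γ / p₁) with hrr
  set t := Real.sqrt (1 - Γ / p₁) with htt
  have hs2 : s ^ 2 = θ := Real.sq_sqrt hθ0
  have hc2 : c ^ 2 = 1 - θ := Real.sq_sqrt (by linarith)
  have hr2 : r ^ 2 = Γ / p₁ := Real.sq_sqrt hx0
  have ht2 : t ^ 2 = 1 - Γ / p₁ := Real.sq_sqrt (by linarith)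
  have hs0 : 0 ≤ s := Real.sqrt_nonneg _
  have hc0 : 0 ≤ c := Real.sqrt_nonneg _
  have hr0 : 0 ≤ r := Real.sqrt_nonneg _
  have ht0 : 0 ≤ t := Real.sqrt_nonneg _
  have hA : Real.sqrt (θ * Γ / p₁) = s * r := by
    rw [mul_div_assoc, hs, hrr, ← Real.sqrt_mul hθ0]
  have hB : Real.sqrt ((1 - θ) * (1 - Γ / p₁)) = c * t := by
    rw [hc, htt, ← Real.sqrt_mul (by linarith)]
  constructor
  · intro h
    have hθlt : θ < 1 := by nlinarith
    have hcpos : 0 < c := Real.sqrt_pos.mpr (by linarith)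
    constructor
    · refine ⟨r / c, le_refl 0, by positivity, ?_, ?_⟩
      · have : (r / c) ^ 2 ≤ 1 := by
          rw [div_pow]
          rw [div_le_one (by positivity)]
          rw [hr2, hc2]
          rw [div_le_iff₀ hp] at *
          linarith
        nlinarith
      · field_simp
        simp
    · rintro α ⟨β, hα0, -⟩
      exact hα0
  · intro h
    have hlt : 1 - θ < Γ / p₁ := by rw [lt_div_iff₀ hp]; linarith
    have hBA : c * t ≤ s * r := by
      rw [← hA, ← hB]
      apply Real.sqrt_le_sqrt
      rw [mul_div_assoc]
      nlinarith
    rw [hA, hB]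
    constructor
    · refine ⟨c * r + s * t, by linarith, by positivity, ?_, ?_⟩
      · have key : (s * r - c * t) ^ 2 + (c * r + s * t) ^ 2 =
            (s ^ 2 + c ^ 2) * (r ^ 2 + t ^ 2) := by ring
        rw [key, hs2, hc2, hr2, ht2]
        nlinarith
      · linear_combination r * hs2 + r * hc2
    · rintro α ⟨β, hα0, hβ0, hsum, hcon⟩
      have hcb : c * β = r - s * α := by linarith
      have hβ2 : β ^ 2 ≤ 1 - α ^ 2 := by linarith
      have h1 : (r - s * α) ^ 2 ≤ c ^ 2 * (1 - α ^ 2) := by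
        rw [← hcb]
        have h := mul_le_mul_of_nonneg_left hβ2 (sq_nonneg c)
        have e3 : (c * β) ^ 2 = c ^ 2 * β ^ 2 := by ring
        linarith
      rw [hc2] at h1
      have e : (α - s * r) ^ 2 = (r - s * α) ^ 2 + (1 - θ) * (α ^ 2 - r ^ 2) := by
        linear_combination (r ^ 2 - α ^ 2) * hs2
      have e2 : (c * t) ^ 2 = (1 - θ) * (1 - α ^ 2) + (1 - θ) * (α ^ 2 - r ^ 2) := by
        linear_combination t ^ 2 * hc2 + (1 - θ) * ht2 + (1 - θ) * hr2
      have h2 : (α - s * r) ^ 2 ≤ (c * t) ^ 2 := by rw [e, e2]; linarith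
      linarith [(abs_le_of_sq_le_sq' h2 (mul_nonneg hc0 ht0)).1]
end

section
/- The function p₁ ↦ p₁·[α₁*(p₁)]², where α₁*(p₁) = 0 for Γ ≤ p₁(1−θ) and α₁*(p₁) = √(θΓ/p₁) − √((1−θ)(1−Γ/p₁)) for Γ > p₁(1−θ), is monotone nonincreasing on the interval [Γ, ∞) for fixed θ ∈ (0,1) and Γ > 0. -/
open Real Set

theorem stmt5 (θ Γ : ℝ) (hθ : θ ∈ Ioo (0 : ℝ) 1) (hΓ : 0 < Γ) :
    AntitoneOn
      (fun p₁ : ℝ =>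
        p₁ * (if Γ ≤ p₁ * (1 - θ) then (0 : ℝ)
              else Real.sqrt (θ * Γ / p₁) - Real.sqrt ((1 - θ) * (1 - Γ / p₁))) ^ 2)
      (Ici Γ) := by
  obtain ⟨hθ0, hθ1⟩ := hθ
  have key : ∀ p ∈ Ici Γ,
      p * (if Γ ≤ p * (1 - θ) then (0 : ℝ)
        else Real.sqrt (θ * Γ / p) - Real.sqrt ((1 - θ) * (1 - Γ / p))) ^ 2
      = (max (Real.sqrt (θ * Γ) - Real.sqrt ((1 - θ) * (p - Γ))) 0) ^ 2 := by
    intro p hp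
    have hpΓ : Γ ≤ p := hp
    have hp0 : 0 < p := lt_of_lt_of_le hΓ hpΓ
    by_cases h : Γ ≤ p * (1 - θ)
    · simp only [if_pos h]
      have h1 : θ * Γ ≤ (1 - θ) * (p - Γ) := by nlinarith
      have hs : Real.sqrt (θ * Γ) ≤ Real.sqrt ((1 - θ) * (p - Γ)) := Real.sqrt_le_sqrt h1
      rw [max_eq_right (by linarith)]
      ring
    · simp only [if_neg h]
      push_neg at h
      have h1 : (1 - θ) * (p - Γ) < θ * Γ := by nlinarith
      have hs : Real.sqrt ((1 - θ) * (p - Γ)) < Real.sqrt (θ * Γ) :=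
        Real.sqrt_lt_sqrt (by nlinarith) h1
      rw [max_eq_left (by linarith)]
      have e2 : (1 - θ) * (1 - Γ / p) = (1 - θ) * (p - Γ) / p := by
        field_simp
      rw [e2, Real.sqrt_div (by positivity) p, Real.sqrt_div (by nlinarith) p]
      have hsp : Real.sqrt p ^ 2 = p := Real.sq_sqrt hp0.le
      have hspne : Real.sqrt p ≠ 0 := by positivity
      field_simp
      rw [hsp]

  intro a ha b hb hab
  simp only
  rw [key a ha, key b hb]
  apply pow_le_pow_left₀ (le_max_right _ _)
  exact max_le_max (by
    have : Real.sqrt ((1 - θ) * (a - Γ)) ≤ Real.sqrt ((1 - θ) * (b - Γ)) :=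
      Real.sqrt_le_sqrt (by nlinarith [mem_Ici.mp ha])
    linarith) le_rfl
end

section
/- Let λ₁, λ₂ > 0, Γ > 0, θ ∈ (0,1), and assume θΓ ≥ τ ≥ 0 where τ = (1/θ)(1/λ₁ + Γ) − 1/λ₂. Then the solution p₁,b of the equation λ₁/(1+Γλ₁) = (λ₂/θ)/(λ₂·p₁·[α₁*(p₁)]² + 1) with α₁*(p₁) = √(θΓ/p₁) − √((1−θ)(1−Γ/p₁)) is given in closed form by p₁,b = Γ + (1/(1−θ))·(√(θΓ) − √τ)². -/
open Real Set

theorem stmt7 (l₁ l₂ Γ θ : ℝ) (h₁ : 0 < l₁) (h₂ : 0 < l₂) (hΓ : 0 < Γ)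
    (hθ : θ ∈ Ioo (0 : ℝ) 1)
    (hτ0 : 0 ≤ 1 / θ * (1 / l₁ + Γ) - 1 / l₂)
    (hτΓ : 1 / θ * (1 / l₁ + Γ) - 1 / l₂ ≤ θ * Γ) :
    l₁ / (1 + Γ * l₁) =
      (l₂ / θ) /
        (l₂ * (Γ + 1 / (1 - θ) *
            (Real.sqrt (θ * Γ) - Real.sqrt (1 / θ * (1 / l₁ + Γ) - 1 / l₂)) ^ 2) *
          (Real.sqrt (θ * Γ / (Γ + 1 / (1 - θ) *
                (Real.sqrt (θ * Γ) - Real.sqrt (1 / θ * (1 / l₁ + Γ) - 1 / l₂)) ^ 2)) -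
            Real.sqrt ((1 - θ) * (1 - Γ / (Γ + 1 / (1 - θ) *
                (Real.sqrt (θ * Γ) - Real.sqrt (1 / θ * (1 / l₁ + Γ) - 1 / l₂)) ^ 2)))) ^ 2
          + 1) := by
  obtain ⟨hθ0, hθ1⟩ := hθ
  set τ := 1 / θ * (1 / l₁ + Γ) - 1 / l₂ with hτdef
  set s := Real.sqrt (θ * Γ) with hs
  set t := Real.sqrt τ with ht
  set p := Γ + 1 / (1 - θ) * (s - t) ^ 2 with hpdef
  have h1θ : 0 < 1 - θ := by linarith
  have hst : t ≤ s := Real.sqrt_le_sqrt hτΓ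
  have hts : t ^ 2 = τ := Real.sq_sqrt hτ0
  have hss : s ^ 2 = θ * Γ := Real.sq_sqrt (by positivity)
  have hppos : 0 < p := by
    have h0 : 0 ≤ 1 / (1 - θ) * (s - t) ^ 2 := by positivity
    rw [hpdef]; linarith
  have hsp : 0 < Real.sqrt p := Real.sqrt_pos.mpr hppos
  have key1 : Real.sqrt (θ * Γ / p) = s / Real.sqrt p := by
    rw [Real.sqrt_div (by positivity)]
  have key2 : Real.sqrt ((1 - θ) * (1 - Γ / p)) = (s - t) / Real.sqrt p := by
    have h : (1 - θ) * (1 - Γ / p) = (s - t) ^ 2 / p := by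
      rw [hpdef]; field_simp; ring
    rw [h, Real.sqrt_div (sq_nonneg _), Real.sqrt_sq (by linarith)]
  have hkey : p * (Real.sqrt (θ * Γ / p) - Real.sqrt ((1 - θ) * (1 - Γ / p))) ^ 2 = τ := by
    rw [key1, key2]
    have h : s / Real.sqrt p - (s - t) / Real.sqrt p = t / Real.sqrt p := by ring
    rw [h, div_pow, Real.sq_sqrt hppos.le, hts]
    field_simp
  rw [mul_assoc, hkey, hτdef]
  have hden : 0 < 1 + Γ * l₁ := by positivity
  have hD : l₂ * (1 / θ * (1 / l₁ + Γ) - 1 / l₂) + 1 = l₂ / θ * (1 / l₁ + Γ) := by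
    field_simp; ring
  rw [hD]
  have hpos2 : (0:ℝ) < 1 / l₁ + Γ := by positivity
  field_simp
end

section
/- Let h₁, h₂ be nonzero vectors in ℂⁿ with θ = |h₁ᴴh₂|²/(‖h₁‖²‖h₂‖²). If w₁ = α₁·Π_{h₂}h₁/‖Π_{h₂}h₁‖ + β₁·Π⊥_{h₂}h₁/‖Π⊥_{h₂}h₁‖ with α₁, β₁ ≥ 0, then |h₁ᴴw₁|² = ‖h₁‖²(√θ·α₁ + √(1−θ)·β₁)² and |h₂ᴴw₁|² = ‖h₂‖²·α₁², where Π_{h₂} is the orthogonal projection onto span{h₂} and Π⊥_{h₂} = I − Π_{h₂}. -/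
set_option maxHeartbeats 800000

open scoped ComplexInnerProductSpace

theorem stmt19 (n : ℕ) (h₁ h₂ : EuclideanSpace ℂ (Fin n))
    (hh₁ : h₁ ≠ 0) (hh₂ : h₂ ≠ 0)
    (Ph : EuclideanSpace ℂ (Fin n))
    (hPh : Ph = (Submodule.orthogonalProjectionOnto (ℂ ∙ h₂) h₁ : EuclideanSpace ℂ (Fin n)))
    (hPne : Ph ≠ 0) (hQne : h₁ - Ph ≠ 0)
    (θ : ℝ) (hθ : θ = ‖⟪h₁, h₂⟫‖ ^ 2 / (‖h₁‖ ^ 2 * ‖h₂‖ ^ 2))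
    (α₁ β₁ : ℝ) (hα : 0 ≤ α₁) (hβ : 0 ≤ β₁)
    (w₁ : EuclideanSpace ℂ (Fin n))
    (hw : w₁ = (α₁ / ‖Ph‖) • Ph + (β₁ / ‖h₁ - Ph‖) • (h₁ - Ph)) :
    ‖⟪h₁, w₁⟫‖ ^ 2 = ‖h₁‖ ^ 2 * (Real.sqrt θ * α₁ + Real.sqrt (1 - θ) * β₁) ^ 2 ∧
    ‖⟪h₂, w₁⟫‖ ^ 2 = ‖h₂‖ ^ 2 * α₁ ^ 2 := by
  have hn1 : (0:ℝ) < ‖h₁‖ := norm_pos_iff.mpr hh₁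
  have hn2 : (0:ℝ) < ‖h₂‖ := norm_pos_iff.mpr hh₂
  set q : EuclideanSpace ℂ (Fin n) := h₁ - Ph with hq
  have hnP : (0:ℝ) < ‖Ph‖ := norm_pos_iff.mpr hPne
  have hnQ : (0:ℝ) < ‖q‖ := norm_pos_iff.mpr hQne
  have hc2 : ((‖h₂‖ ^ 2 : ℝ) : ℂ) ≠ 0 := by
    exact_mod_cast pow_ne_zero 2 hn2.ne'
  have hPc : Ph = (⟪h₂, h₁⟫ / ((‖h₂‖ ^ 2 : ℝ) : ℂ)) • h₂ := by
    rw [hPh, Submodule.coe_orthogonalProjectionOnto_apply, Submodule.starProjection_singleton]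
    rfl
  have h2Ph : ⟪h₂, Ph⟫ = ⟪h₂, h₁⟫ := by
    rw [hPc, inner_smul_right, inner_self_eq_norm_sq_to_K]
    push_cast
    exact div_mul_cancel₀ _ (pow_ne_zero 2 (Complex.ofReal_ne_zero.mpr hn2.ne'))
  have horth : ⟪h₂, q⟫ = 0 := by rw [hq, inner_sub_right, h2Ph, sub_self]
  have hPorth : ⟪Ph, q⟫ = 0 := by
    rw [hPc, inner_smul_left, horth, mul_zero]
  have hQorth : ⟪q, Ph⟫ = 0 := by
    rw [← inner_conj_symm, hPorth, map_zero]
  have hsplit : h₁ = Ph + q := by rw [hq]; abel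
  have h1P : ⟪h₁, Ph⟫ = ((‖Ph‖ ^ 2 : ℝ) : ℂ) := by
    conv_lhs => rw [hsplit]
    rw [inner_add_left, hQorth, add_zero, inner_self_eq_norm_sq_to_K]
    norm_cast
  have h1Q : ⟪h₁, q⟫ = ((‖q‖ ^ 2 : ℝ) : ℂ) := by
    conv_lhs => rw [hsplit]
    rw [inner_add_left, hPorth, zero_add, inner_self_eq_norm_sq_to_K]
    norm_cast
  have hsm : ∀ (r : ℝ) (x : EuclideanSpace ℂ (Fin n)), r • x = ((r : ℂ)) • x := by
    intro r x
    rw [← algebraMap_smul ℂ r x]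
    rfl
  set a : ℝ := ‖⟪h₂, h₁⟫‖ with ha
  set b : ℝ := ‖⟪h₁, h₂⟫‖ with hb
  have ha0 : 0 ≤ a := norm_nonneg _
  have hip : b = a := by
    rw [hb, ha, ← inner_conj_symm h₂ h₁, RCLike.norm_conj]
  have hPnorm2 : ‖Ph‖ ^ 2 = a ^ 2 / ‖h₂‖ ^ 2 := by
    rw [hPc, norm_smul, norm_div, Complex.norm_real,
      Real.norm_of_nonneg (by positivity : (0:ℝ) ≤ ‖h₂‖ ^ 2), ← ha]
    field_simp
  have hθ0 : 0 ≤ θ := by rw [hθ]; positivity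
  have hθval : ‖h₁‖ ^ 2 * θ = ‖Ph‖ ^ 2 := by
    rw [hθ, hip, hPnorm2]
    field_simp
  have hA : ‖h₁‖ * Real.sqrt θ = ‖Ph‖ := by
    rw [show ‖Ph‖ = Real.sqrt (‖Ph‖ ^ 2) from (Real.sqrt_sq hnP.le).symm,
      show ‖h₁‖ = Real.sqrt (‖h₁‖ ^ 2) from (Real.sqrt_sq hn1.le).symm,
      ← Real.sqrt_mul (by positivity) θ, hθval]
  have hpyth : ‖h₁‖ ^ 2 = ‖Ph‖ ^ 2 + ‖q‖ ^ 2 := by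
    conv_lhs => rw [hsplit]
    rw [@norm_add_sq ℂ _ _ _ _ Ph q, hPorth]
    simp
  have hθ1 : 0 ≤ 1 - θ := by nlinarith
  have hB : ‖h₁‖ * Real.sqrt (1 - θ) = ‖q‖ := by
    rw [show ‖q‖ = Real.sqrt (‖q‖ ^ 2) from (Real.sqrt_sq hnQ.le).symm,
      show ‖h₁‖ = Real.sqrt (‖h₁‖ ^ 2) from (Real.sqrt_sq hn1.le).symm,
      ← Real.sqrt_mul (by positivity) (1 - θ)]
    rw [show ‖h₁‖ ^ 2 * (1 - θ) = ‖q‖ ^ 2 by nlinarith]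
  have key1 : ⟪h₁, w₁⟫ = (((α₁ * ‖Ph‖ + β₁ * ‖q‖ : ℝ)) : ℂ) := by
    rw [hw, inner_add_right, hsm, hsm, inner_smul_right, inner_smul_right, h1P, h1Q]
    push_cast
    have hPc' : ((‖Ph‖ : ℝ) : ℂ) ≠ 0 := by exact_mod_cast hnP.ne'
    have hQc' : ((‖q‖ : ℝ) : ℂ) ≠ 0 := by exact_mod_cast hnQ.ne'
    field_simp
  have key2 : ⟪h₂, w₁⟫ = (((α₁ / ‖Ph‖ : ℝ)) : ℂ) * ⟪h₂, h₁⟫ := by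
    rw [hw, inner_add_right, hsm, hsm, inner_smul_right, inner_smul_right, h2Ph, horth,
      mul_zero, add_zero]
  have hip2 : a = ‖Ph‖ * ‖h₂‖ := by
    have hsq : a ^ 2 = (‖Ph‖ * ‖h₂‖) ^ 2 := by
      rw [mul_pow, hPnorm2]; field_simp
    rw [← Real.sqrt_sq ha0, hsq, Real.sqrt_sq (by positivity)]
  constructor
  · rw [key1, Complex.norm_real, Real.norm_of_nonneg (by positivity), ← hA, ← hB]
    ring
  · rw [key2, norm_mul, Complex.norm_real, Real.norm_of_nonneg (by positivity), ← ha, hip2]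
    field_simp
end
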